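/- Let ρ ∈ (0,1) and let Ḡ ∈ ℝ^{n×n} be diagonalizable over ℝ with Ḡ = Q E Q^{-1}, where Q ∈ ℝ^{n×n} is invertible and E ∈ ℝ^{n×n} is diagonal with |E_{ii}| ≤ ρ for all i (i.e. the spectral radius of Ḡ is at most ρ). Let B̄ ∈ ℝ^{n×m}, c₁ > 0, and let (G_k)_{k∈ℕ} in ℝ^{n×n} and (B_k)_{k∈ℕ} in ℝ^{n×m} satisfy ‖G_k − Ḡ‖_op ≤ c₁ ρ^{k+1} and ‖B_k − B̄‖ ≤ c₁ ρ^{k+1} for all k ∈ ℕ. Define D_{k+1} = G_k D_k + B_k from any D_0 ∈ ℝ^{n×m} and set D̄ = (I − Ḡ)^{-1} B̄. Then for all k ∈ ℕ: ‖D_k − D̄‖ ≤ ρ^{k/2} · ‖Q‖_op ‖Q^{-1}‖_op · exp( c₁ ‖Q^{-1}‖_op (1 + ‖Q‖_op) √ρ (1 + ‖Q^{-1}‖_op ‖B̄‖)/(1−ρ)² ) · ( ‖D_0‖ + ‖B̄‖/(1−ρ) + c₁ (1 + ‖Q‖_op) √ρ (1 + ‖B̄‖)/(1−√ρ)² ).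 -/

import Mathlib

open Matrix

/-- Frobenius norm of a real matrix. -/
noncomputable def frobNorm {n m : ℕ} (M : Matrix (Fin n) (Fin m) ℝ) : ℝ :=
  Real.sqrt (∑ i, ∑ j, (M i j) ^ 2)

/-- Operator norm (induced by the Euclidean norms) of a real matrix. -/
noncomputable def l2OpNorm {n m : ℕ} (M : Matrix (Fin n) (Fin m) ℝ) : ℝ :=
  ‖LinearMap.toContinuousLinearMap (Matrix.toEuclideanLin M)‖

/-!
In the eigenbasis the error `eₖ = Q⁻¹ (Dₖ - D̄)` satisfies
`eₖ₊₁ = E eₖ + Q⁻¹ ((Gₖ - Ḡ) Dₖ + (Bₖ - B̄))`, because `D̄` is the fixed point of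
`X ↦ Ḡ X + B̄`. With `a = ‖Q‖_op`, `b = ‖Q⁻¹‖_op` and `‖Dₖ‖ ≤ a (‖eₖ‖ + ‖Q⁻¹ D̄‖)` this gives
`‖eₖ₊₁‖ ≤ (ρ + a b c₁ ρᵏ⁺¹) ‖eₖ‖ + b c₁ (1 + a ‖Q⁻¹ D̄‖) ρᵏ⁺¹`. Dividing by `√ρᵏ` leaves a
factor `√ρ + a b c₁ √ρ ρᵏ ≤ exp (a b c₁ √ρ ρᵏ)`, whose product over `k` is bounded
(a discrete Grönwall inequality); this is where the rate drops from `ρ` to `√ρ`. The same fixed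
point equation gives `‖Q⁻¹ D̄‖ ≤ b ‖B̄‖ / (1 - ρ)`.
-/

open Real Finset

variable {n m p : ℕ}

section Frobenius

attribute [local instance] Matrix.frobeniusNormedAddCommGroup

lemma frobNorm_eq_norm (M : Matrix (Fin n) (Fin m) ℝ) : frobNorm M = ‖M‖ := by
  simp [frobNorm, frobenius_norm_def, Real.sqrt_eq_rpow, sq_abs]

lemma frobNorm_nonneg (M : Matrix (Fin n) (Fin m) ℝ) : 0 ≤ frobNorm M :=
  Real.sqrt_nonneg _

lemma frobNorm_add_le (M N : Matrix (Fin n) (Fin m) ℝ) :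
    frobNorm (M + N) ≤ frobNorm M + frobNorm N := by
  simpa only [frobNorm_eq_norm] using norm_add_le M N

lemma frobNorm_sub_le (M N : Matrix (Fin n) (Fin m) ℝ) :
    frobNorm (M - N) ≤ frobNorm M + frobNorm N := by
  simpa only [frobNorm_eq_norm] using norm_sub_le M N

end Frobenius

lemma frobNorm_eq_sqrt_sum_norm_col_sq (X : Matrix (Fin n) (Fin m) ℝ) :
    frobNorm X = √(∑ j, ‖WithLp.toLp 2 (Xᵀ j)‖ ^ 2) := by
  rw [frobNorm, Finset.sum_comm]
  simp [EuclideanSpace.norm_sq_eq, sq_abs]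

section Operator

open scoped Matrix.Norms.L2Operator

lemma l2OpNorm_nonneg (M : Matrix (Fin n) (Fin m) ℝ) : 0 ≤ l2OpNorm M := norm_nonneg M

lemma l2OpNorm_diagonal_le {E : Fin n → ℝ} {ρ : ℝ} (hρ : 0 ≤ ρ) (hE : ∀ i, |E i| ≤ ρ) :
    l2OpNorm (diagonal E) ≤ ρ :=
  (l2_opNorm_diagonal E).trans_le ((pi_norm_le_iff_of_nonneg hρ).2 hE)

lemma frobNorm_mul_le (M : Matrix (Fin p) (Fin n) ℝ) (X : Matrix (Fin n) (Fin m) ℝ) :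
    frobNorm (M * X) ≤ l2OpNorm M * frobNorm X := by
  rw [frobNorm_eq_sqrt_sum_norm_col_sq, frobNorm_eq_sqrt_sum_norm_col_sq]
  calc √(∑ j, ‖WithLp.toLp 2 ((M * X)ᵀ j)‖ ^ 2)
      ≤ √(∑ j, (l2OpNorm M * ‖WithLp.toLp 2 (Xᵀ j)‖) ^ 2) := by
        gcongr with j
        exact M.l2_opNorm_mulVec (WithLp.toLp 2 (Xᵀ j))
    _ = l2OpNorm M * √(∑ j, ‖WithLp.toLp 2 (Xᵀ j)‖ ^ 2) := by
        simp_rw [mul_pow, ← Finset.mul_sum]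
        rw [Real.sqrt_mul (sq_nonneg _), Real.sqrt_sq (l2OpNorm_nonneg M)]

end Operator

lemma frobNorm_diagonal_mul_le {E : Fin n → ℝ} {ρ : ℝ} (hρ : 0 ≤ ρ) (hE : ∀ i, |E i| ≤ ρ)
    (X : Matrix (Fin n) (Fin m) ℝ) : frobNorm (diagonal E * X) ≤ ρ * frobNorm X :=
  (frobNorm_mul_le _ X).trans
    (mul_le_mul_of_nonneg_right (l2OpNorm_diagonal_le hρ hE) (frobNorm_nonneg X))

lemma isUnit_det_one_sub_conj_diagonal {ι K : Type*} [Fintype ι] [DecidableEq ι] [Field K]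
    {Q : Matrix ι ι K} (hQ : IsUnit Q.det) {E : ι → K} (hE : ∀ i, E i ≠ 1) :
    IsUnit (1 - Q * diagonal E * Q⁻¹).det := by
  have hconj : 1 - Q * diagonal E * Q⁻¹ = Q * diagonal (1 - E) * Q⁻¹ := by
    have hdiag : diagonal (1 - E) = 1 - diagonal E := by
      rw [← diagonal_one]
      exact (diagonal_sub _ _).symm
    rw [hdiag, Matrix.mul_sub, Matrix.sub_mul, Matrix.mul_one, mul_nonsing_inv Q hQ]
  rw [hconj, det_conj ((isUnit_iff_isUnit_det Q).2 hQ), det_diagonal, isUnit_iff_ne_zero,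
    Finset.prod_ne_zero_iff]
  exact fun i _ => sub_ne_zero.2 (hE i).symm

lemma mul_inv_one_sub_mul_add {ι κ K : Type*} [Fintype ι] [DecidableEq ι] [Field K]
    {G : Matrix ι ι K} (hG : IsUnit (1 - G).det) (B : Matrix ι κ K) :
    G * ((1 - G)⁻¹ * B) + B = (1 - G)⁻¹ * B := by
  have h := mul_nonsing_inv_cancel_left (1 - G) B hG
  rw [Matrix.sub_mul, Matrix.one_mul] at h
  nth_rewrite 2 [← h]
  rw [add_sub_cancel]

lemma le_exp_sum_mul_of_le_exp_mul_add {z e f : ℕ → ℝ} (he : ∀ j, 0 ≤ e j) (hf : ∀ j, 0 ≤ f j)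
    (h : ∀ j, z (j + 1) ≤ exp (e j) * z j + f j) (k : ℕ) :
    z k ≤ exp (∑ j ∈ range k, e j) * (z 0 + ∑ j ∈ range k, f j) := by
  induction k with
  | zero => simp
  | succ k ih =>
    have hexp : 1 ≤ exp (e k) * exp (∑ j ∈ range k, e j) := by
      rw [← exp_add]
      exact one_le_exp (add_nonneg (he k) (sum_nonneg fun j _ => he j))
    rw [sum_range_succ, sum_range_succ, add_comm _ (e k), exp_add]
    calc z (k + 1) ≤ exp (e k) * z k + f k := h k
      _ ≤ exp (e k) * (exp (∑ j ∈ range k, e j) * (z 0 + ∑ j ∈ range k, f j)) +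
          exp (e k) * exp (∑ j ∈ range k, e j) * f k := by
        gcongr
        exact le_mul_of_one_le_left (hf k) hexp
      _ = _ := by ring

lemma sum_range_pow_le_one_div {x : ℝ} (hx0 : 0 ≤ x) (hx1 : x < 1) (k : ℕ) :
    ∑ j ∈ range k, x ^ j ≤ 1 / (1 - x) := by
  simpa only [pow_zero, ← range_eq_Ico] using geom_sum_Ico_le_of_lt_one (m := 0) (n := k) hx0 hx1

lemma le_sqrt_pow_mul_of_le_mul_add {y : ℕ → ℝ} {ρ α u : ℝ} (hρ0 : 0 < ρ) (hρ1 : ρ < 1)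
    (hα : 0 ≤ α) (hu : 0 ≤ u) (hy : ∀ j, 0 ≤ y j)
    (h : ∀ j, y (j + 1) ≤ (ρ + α * ρ ^ (j + 1)) * y j + u * ρ ^ (j + 1)) (k : ℕ) :
    y k ≤ √ρ ^ k * (exp (α * √ρ / (1 - ρ)) * (y 0 + u * √ρ / (1 - √ρ))) := by
  set s := √ρ
  have hs0 : 0 < s := sqrt_pos.2 hρ0
  have hs1 : s < 1 := (sqrt_lt_sqrt hρ0.le hρ1).trans_eq sqrt_one
  have hss : s ^ 2 = ρ := sq_sqrt hρ0.le
  have hz : ∀ j, y (j + 1) / s ^ (j + 1) ≤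
      exp (α * s * ρ ^ j) * (y j / s ^ j) + u * s ^ (j + 1) := fun j =>
    calc y (j + 1) / s ^ (j + 1)
        ≤ ((ρ + α * ρ ^ (j + 1)) * y j + u * ρ ^ (j + 1)) / s ^ (j + 1) := by gcongr; exact h j
      _ = (s + α * s * ρ ^ j) * (y j / s ^ j) + u * s ^ (j + 1) := by
          rw [← hss]; field_simp; ring
      _ ≤ exp (α * s * ρ ^ j) * (y j / s ^ j) + u * s ^ (j + 1) := by
          gcongr
          · exact div_nonneg (hy j) (by positivity)
          · linarith [add_one_le_exp (α * s * ρ ^ j)]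
  have hsumρ : ∑ j ∈ range k, α * s * ρ ^ j ≤ α * s / (1 - ρ) := by
    rw [← mul_sum, ← mul_one_div]
    exact mul_le_mul_of_nonneg_left (sum_range_pow_le_one_div hρ0.le hρ1 k) (by positivity)
  have hsums : ∑ j ∈ range k, u * s ^ (j + 1) ≤ u * s / (1 - s) := by
    simp_rw [pow_succ, ← mul_assoc, ← sum_mul, ← mul_sum, mul_right_comm u]
    rw [← mul_one_div]
    exact mul_le_mul_of_nonneg_left (sum_range_pow_le_one_div hs0.le hs1 k) (by positivity)
  have hgron := le_exp_sum_mul_of_le_exp_mul_add (z := fun j => y j / s ^ j)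
    (fun j => by positivity) (fun j => by positivity) hz k
  simp only [pow_zero, div_one] at hgron
  calc y k = s ^ k * (y k / s ^ k) := by field_simp
    _ ≤ s ^ k * (exp (α * s / (1 - ρ)) * (y 0 + u * s / (1 - s))) := by
      gcongr
      refine hgron.trans ?_
      gcongr
      exact add_nonneg (hy 0) (sum_nonneg fun j _ => by positivity)

-- With `q = (1 - ρ)⁻¹` and `r = (1 - s)⁻¹`, AM-GM splits the cross term `a (b β q) r` into
-- `a r²`, paid for by the `(1 + a)` in the last summand, and `a (b β q)²`, paid for by the
-- increase `δ` of the exponent acting on `β q`.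
lemma exp_mul_cross_term_le {a b β d c₁ ρ s : ℝ} (ha : 0 ≤ a) (hb : 0 ≤ b) (hβ : 0 ≤ β) (hd : 0 ≤ d)
    (hc₁ : 0 ≤ c₁) (hρ0 : 0 ≤ ρ) (hρ1 : ρ < 1) (hs0 : 0 ≤ s) (hs1 : s < 1) :
    exp (a * b * c₁ * s / (1 - ρ)) *
        (d + β / (1 - ρ) + c₁ * (1 + a * (b * β / (1 - ρ))) * s / (1 - s)) ≤
      exp (c₁ * b * (1 + a) * s * (1 + b * β) / (1 - ρ) ^ 2) *
        (d + β / (1 - ρ) + c₁ * (1 + a) * s * (1 + β) / (1 - s) ^ 2) := by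
  have hq : 1 ≤ (1 - ρ)⁻¹ := one_le_inv₀ (by linarith) |>.2 (by linarith)
  have hr : 1 ≤ (1 - s)⁻¹ := one_le_inv₀ (by linarith) |>.2 (by linarith)
  simp only [div_eq_mul_inv, ← inv_pow]
  generalize (1 - ρ)⁻¹ = q at hq ⊢
  generalize (1 - s)⁻¹ = r at hr ⊢
  set δ := c₁ * b * (1 + a) * s * (1 + b * β) * q ^ 2 - a * b * c₁ * s * q with hδ_def
  set t := c₁ * (1 + a) * s * (1 + β) * r ^ 2 with ht_def
  have hcs : 0 ≤ c₁ * s := mul_nonneg hc₁ hs0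
  have hδ_ge : a * (c₁ * s) * b * (b * β) * q ^ 2 ≤ δ := by
    have : 0 ≤ c₁ * s * b * (q ^ 2 * (1 + b * β) + a * q * (q - 1)) := by
      have := mul_nonneg (mul_nonneg ha (by linarith : (0 : ℝ) ≤ q)) (sub_nonneg.2 hq)
      positivity
    linarith
  have hδ0 : 0 ≤ δ := le_trans (by positivity) hδ_ge
  have hδ : a * (c₁ * s) * (b * β * q) ^ 2 ≤ δ * (β * q) := by
    have hK : 0 ≤ a * (c₁ * s) * b * (b * β) * q ^ 2 * β := by positivity
    calc a * (c₁ * s) * (b * β * q) ^ 2 ≤ a * (c₁ * s) * b * (b * β) * q ^ 2 * (β * q) := by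
          nlinarith [mul_le_mul_of_nonneg_left hq hK]
      _ ≤ δ * (β * q) := by gcongr
  have hamgm : a * (b * β * q * r) ≤ a * ((b * β * q) ^ 2 + r ^ 2) :=
    mul_le_mul_of_nonneg_left (by nlinarith [sq_nonneg (b * β * q - r)]) ha
  have hlin : d + β * q + c₁ * (1 + a * (b * β * q)) * s * r ≤ (1 + δ) * (d + β * q + t) := by
    have ht0 : 0 ≤ t := by positivity
    have h1 : c₁ * s * r ≤ c₁ * s * r ^ 2 := mul_le_mul_of_nonneg_left (by nlinarith) hcs
    have h2 : c₁ * s * r ^ 2 + c₁ * s * a * r ^ 2 ≤ t := by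
      rw [ht_def]; nlinarith [mul_nonneg (mul_nonneg hcs (sq_nonneg r)) (mul_nonneg ha hβ),
        mul_nonneg (mul_nonneg hcs (sq_nonneg r)) hβ]
    linarith [mul_le_mul_of_nonneg_left hamgm hcs, mul_nonneg hδ0 hd, mul_nonneg hδ0 ht0]
  calc exp (a * b * c₁ * s * q) * (d + β * q + c₁ * (1 + a * (b * β * q)) * s * r)
      ≤ exp (a * b * c₁ * s * q) * ((1 + δ) * (d + β * q + t)) := by gcongr
    _ ≤ exp (a * b * c₁ * s * q) * (exp δ * (d + β * q + t)) := by
        gcongr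
        linarith [add_one_le_exp δ]
    _ = _ := by rw [← mul_assoc, ← exp_add, hδ_def, add_sub_cancel]

lemma rate_constants_le {a b β d c₁ ρ s y₀ c : ℝ} (ha : 0 ≤ a) (hb : 0 ≤ b) (hβ : 0 ≤ β)
    (hd : 0 ≤ d) (hc₁ : 0 ≤ c₁) (hρ0 : 0 ≤ ρ) (hρ1 : ρ < 1) (hs0 : 0 ≤ s) (hs1 : s < 1)
    (hy₀ : y₀ ≤ b * d + c) (hc : c ≤ b * β / (1 - ρ)) :
    exp (a * b * c₁ * s / (1 - ρ)) * (y₀ + b * c₁ * (1 + a * c) * s / (1 - s)) ≤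
      b * (exp (c₁ * b * (1 + a) * s * (1 + b * β) / (1 - ρ) ^ 2) *
        (d + β / (1 - ρ) + c₁ * (1 + a) * s * (1 + β) / (1 - s) ^ 2)) := by
  have hcoef : b * c₁ * (1 + a * c) ≤ b * c₁ * (1 + a * (b * β / (1 - ρ))) :=
    mul_le_mul_of_nonneg_left (by linarith [mul_le_mul_of_nonneg_left hc ha])
      (mul_nonneg hb hc₁)
  have hfrac : 0 ≤ s / (1 - s) := div_nonneg hs0 (by linarith)
  have hpoly : y₀ + b * c₁ * (1 + a * c) * s / (1 - s) ≤
      b * (d + β / (1 - ρ) + c₁ * (1 + a * (b * β / (1 - ρ))) * s / (1 - s)) :=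
    calc y₀ + b * c₁ * (1 + a * c) * s / (1 - s)
        = y₀ + b * c₁ * (1 + a * c) * (s / (1 - s)) := by ring
      _ ≤ (b * d + b * β / (1 - ρ)) + b * c₁ * (1 + a * (b * β / (1 - ρ))) * (s / (1 - s)) :=
          add_le_add (by linarith) (mul_le_mul_of_nonneg_right hcoef hfrac)
      _ = _ := by ring
  calc exp (a * b * c₁ * s / (1 - ρ)) * (y₀ + b * c₁ * (1 + a * c) * s / (1 - s))
      ≤ exp (a * b * c₁ * s / (1 - ρ)) *
          (b * (d + β / (1 - ρ) + c₁ * (1 + a * (b * β / (1 - ρ))) * s / (1 - s))) := by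
        gcongr
    _ = b * (exp (a * b * c₁ * s / (1 - ρ)) *
          (d + β / (1 - ρ) + c₁ * (1 + a * (b * β / (1 - ρ))) * s / (1 - s))) := by ring
    _ ≤ _ := mul_le_mul_of_nonneg_left
        (exp_mul_cross_term_le ha hb hβ hd hc₁ hρ0 hρ1 hs0 hs1) hb

section Conjugation

variable {Q : Matrix (Fin n) (Fin n) ℝ} {E : Fin n → ℝ} {ρ : ℝ} {Gbar : Matrix (Fin n) (Fin n) ℝ}
  {Bbar Dbar : Matrix (Fin n) (Fin m) ℝ}

lemma frobNorm_le_l2OpNorm_mul_frobNorm_inv_mul (hQ : IsUnit Q.det)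
    (X : Matrix (Fin n) (Fin m) ℝ) : frobNorm X ≤ l2OpNorm Q * frobNorm (Q⁻¹ * X) := by
  simpa only [mul_nonsing_inv_cancel_left _ _ hQ] using frobNorm_mul_le Q (Q⁻¹ * X)

lemma frobNorm_inv_mul_le_of_mul_add_eq (hρ : 0 ≤ ρ) (hρ1 : ρ < 1) (hE : ∀ i, |E i| ≤ ρ)
    (hQG : Q⁻¹ * Gbar = diagonal E * Q⁻¹) (hfix : Gbar * Dbar + Bbar = Dbar) :
    frobNorm (Q⁻¹ * Dbar) ≤ l2OpNorm Q⁻¹ * frobNorm Bbar / (1 - ρ) := by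
  have hsplit : Q⁻¹ * Dbar = diagonal E * (Q⁻¹ * Dbar) + Q⁻¹ * Bbar := by
    conv_lhs => rw [← hfix]
    rw [Matrix.mul_add, ← Matrix.mul_assoc, hQG, Matrix.mul_assoc]
  have h : frobNorm (Q⁻¹ * Dbar) ≤ ρ * frobNorm (Q⁻¹ * Dbar) + l2OpNorm Q⁻¹ * frobNorm Bbar :=
    calc frobNorm (Q⁻¹ * Dbar) ≤ frobNorm (diagonal E * (Q⁻¹ * Dbar)) + frobNorm (Q⁻¹ * Bbar) :=
          (congrArg frobNorm hsplit).trans_le (frobNorm_add_le _ _)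
      _ ≤ _ := add_le_add (frobNorm_diagonal_mul_le hρ hE _) (frobNorm_mul_le _ _)
  rw [le_div_iff₀ (by linarith)]
  linarith

lemma frobNorm_inv_mul_mul_add_sub_le (hQ : IsUnit Q.det) (hρ : 0 ≤ ρ) (hE : ∀ i, |E i| ≤ ρ)
    (hQG : Q⁻¹ * Gbar = diagonal E * Q⁻¹) (hfix : Gbar * Dbar + Bbar = Dbar)
    {G : Matrix (Fin n) (Fin n) ℝ} {B D : Matrix (Fin n) (Fin m) ℝ} {ε : ℝ}
    (hG : l2OpNorm (G - Gbar) ≤ ε) (hB : frobNorm (B - Bbar) ≤ ε) :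
    frobNorm (Q⁻¹ * (G * D + B - Dbar)) ≤
      (ρ + l2OpNorm Q * l2OpNorm Q⁻¹ * ε) * frobNorm (Q⁻¹ * (D - Dbar)) +
        l2OpNorm Q⁻¹ * ε * (1 + l2OpNorm Q * frobNorm (Q⁻¹ * Dbar)) := by
  have hε : 0 ≤ ε := (l2OpNorm_nonneg _).trans hG
  have hsplit : Q⁻¹ * (G * D + B - Dbar) =
      diagonal E * (Q⁻¹ * (D - Dbar)) + Q⁻¹ * ((G - Gbar) * D + (B - Bbar)) := by
    have h : G * D + B - Dbar = Gbar * (D - Dbar) + ((G - Gbar) * D + (B - Bbar)) := by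
      conv_lhs => rw [← hfix]
      rw [Matrix.mul_sub, Matrix.sub_mul]
      abel
    rw [h, Matrix.mul_add, ← Matrix.mul_assoc, hQG, Matrix.mul_assoc]
  have hD : frobNorm D ≤ l2OpNorm Q * (frobNorm (Q⁻¹ * (D - Dbar)) + frobNorm (Q⁻¹ * Dbar)) := by
    refine (frobNorm_le_l2OpNorm_mul_frobNorm_inv_mul hQ D).trans ?_
    gcongr
    · exact l2OpNorm_nonneg Q
    · simpa only [← Matrix.mul_add, sub_add_cancel] using
        frobNorm_add_le (Q⁻¹ * (D - Dbar)) (Q⁻¹ * Dbar)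
  calc frobNorm (Q⁻¹ * (G * D + B - Dbar))
      ≤ ρ * frobNorm (Q⁻¹ * (D - Dbar)) +
          l2OpNorm Q⁻¹ * (ε * (l2OpNorm Q *
            (frobNorm (Q⁻¹ * (D - Dbar)) + frobNorm (Q⁻¹ * Dbar))) + ε) := by
        rw [hsplit]
        refine (frobNorm_add_le _ _).trans (add_le_add (frobNorm_diagonal_mul_le hρ hE _) ?_)
        refine (frobNorm_mul_le _ _).trans (mul_le_mul_of_nonneg_left ?_ (l2OpNorm_nonneg _))
        refine (frobNorm_add_le _ _).trans (add_le_add ?_ hB)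
        exact (frobNorm_mul_le _ _).trans (mul_le_mul hG hD (frobNorm_nonneg _) hε)
    _ = _ := by ring

lemma frobNorm_inv_mul_iterate_sub_le (hQ : IsUnit Q.det) (hρ0 : 0 < ρ) (hρ1 : ρ < 1)
    (hE : ∀ i, |E i| ≤ ρ) (hQG : Q⁻¹ * Gbar = diagonal E * Q⁻¹)
    (hfix : Gbar * Dbar + Bbar = Dbar) {c₁ : ℝ} (hc₁ : 0 ≤ c₁)
    {G : ℕ → Matrix (Fin n) (Fin n) ℝ} {B D : ℕ → Matrix (Fin n) (Fin m) ℝ}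
    (hG : ∀ k, l2OpNorm (G k - Gbar) ≤ c₁ * ρ ^ (k + 1))
    (hB : ∀ k, frobNorm (B k - Bbar) ≤ c₁ * ρ ^ (k + 1))
    (hD : ∀ k, D (k + 1) = G k * D k + B k) (k : ℕ) :
    frobNorm (Q⁻¹ * (D k - Dbar)) ≤
      √ρ ^ k * (exp (l2OpNorm Q * l2OpNorm Q⁻¹ * c₁ * √ρ / (1 - ρ)) *
        (frobNorm (Q⁻¹ * (D 0 - Dbar)) +
          l2OpNorm Q⁻¹ * c₁ * (1 + l2OpNorm Q * frobNorm (Q⁻¹ * Dbar)) * √ρ / (1 - √ρ))) := by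
  have ha := l2OpNorm_nonneg Q
  have hb := l2OpNorm_nonneg Q⁻¹
  have hc := frobNorm_nonneg (Q⁻¹ * Dbar)
  refine le_sqrt_pow_mul_of_le_mul_add (y := fun j => frobNorm (Q⁻¹ * (D j - Dbar))) hρ0 hρ1
    (by positivity) (by positivity) (fun j => frobNorm_nonneg _) (fun j => ?_) k
  have h := frobNorm_inv_mul_mul_add_sub_le hQ hρ0.le hE hQG hfix (D := D j) (hG j) (hB j)
  rw [← hD j] at h
  exact h.trans_eq (by ring)

end Conjugation

theorem explicit_rate_linear_convergence_general
    (n m : ℕ)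
    (ρ c₁ : ℝ) (hρ : ρ ∈ Set.Ioo (0 : ℝ) 1) (hc₁ : 0 < c₁)
    (Q : Matrix (Fin n) (Fin n) ℝ) (hQ : IsUnit Q.det)
    (E : Fin n → ℝ) (hE : ∀ i, |E i| ≤ ρ)
    (Gbar : Matrix (Fin n) (Fin n) ℝ)
    (hGbar : Gbar = Q * Matrix.diagonal E * Q⁻¹)
    (Bbar : Matrix (Fin n) (Fin m) ℝ)
    (G : ℕ → Matrix (Fin n) (Fin n) ℝ) (B : ℕ → Matrix (Fin n) (Fin m) ℝ)
    (hG : ∀ k, l2OpNorm (G k - Gbar) ≤ c₁ * ρ ^ (k + 1))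
    (hB : ∀ k, frobNorm (B k - Bbar) ≤ c₁ * ρ ^ (k + 1))
    (D : ℕ → Matrix (Fin n) (Fin m) ℝ)
    (hD : ∀ k, D (k + 1) = G k * D k + B k) :
    ∀ k : ℕ,
      frobNorm (D k - (1 - Gbar)⁻¹ * Bbar) ≤
        Real.sqrt ρ ^ k * (l2OpNorm Q * l2OpNorm Q⁻¹) *
          Real.exp (c₁ * l2OpNorm Q⁻¹ * (1 + l2OpNorm Q) * Real.sqrt ρ *
            (1 + l2OpNorm Q⁻¹ * frobNorm Bbar) / (1 - ρ) ^ 2) *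
          (frobNorm (D 0) + frobNorm Bbar / (1 - ρ) +
            c₁ * (1 + l2OpNorm Q) * Real.sqrt ρ * (1 + frobNorm Bbar) /
              (1 - Real.sqrt ρ) ^ 2) := by
  intro k
  obtain ⟨hρ0, hρ1⟩ := hρ
  have hQG : Q⁻¹ * Gbar = diagonal E * Q⁻¹ := by
    rw [hGbar, Matrix.mul_assoc, nonsing_inv_mul_cancel_left _ _ hQ]
  have hE1 : ∀ i, E i ≠ 1 := fun i => ((le_abs_self _).trans (hE i)).trans_lt hρ1 |>.ne
  have hfix := mul_inv_one_sub_mul_add (hGbar ▸ isUnit_det_one_sub_conj_diagonal hQ hE1) Bbar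
  set Dbar := (1 - Gbar)⁻¹ * Bbar
  have hy₀ : frobNorm (Q⁻¹ * (D 0 - Dbar)) ≤
      l2OpNorm Q⁻¹ * frobNorm (D 0) + frobNorm (Q⁻¹ * Dbar) := by
    rw [Matrix.mul_sub]
    exact (frobNorm_sub_le _ _).trans (add_le_add (frobNorm_mul_le _ _) le_rfl)
  have hc := frobNorm_inv_mul_le_of_mul_add_eq hρ0.le hρ1 hE hQG hfix
  have hs1 : √ρ < 1 := (sqrt_lt_sqrt hρ0.le hρ1).trans_eq sqrt_one
  have hrate := rate_constants_le (l2OpNorm_nonneg Q) (l2OpNorm_nonneg Q⁻¹)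
    (frobNorm_nonneg Bbar) (frobNorm_nonneg (D 0)) hc₁.le hρ0.le hρ1 (sqrt_nonneg ρ) hs1 hy₀ hc
  calc frobNorm (D k - Dbar) ≤ l2OpNorm Q * frobNorm (Q⁻¹ * (D k - Dbar)) :=
        frobNorm_le_l2OpNorm_mul_frobNorm_inv_mul hQ _
    _ ≤ l2OpNorm Q * (√ρ ^ k * (l2OpNorm Q⁻¹ * _)) :=
        mul_le_mul_of_nonneg_left
          ((frobNorm_inv_mul_iterate_sub_le hQ hρ0 hρ1 hE hQG hfix hc₁.le hG hB hD k).trans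
            (mul_le_mul_of_nonneg_left hrate (pow_nonneg (sqrt_nonneg ρ) k)))
          (l2OpNorm_nonneg Q)
    _ = _ := by ring

/-- Explicit rate for linear convergence: for `Ḡ = Q E Q⁻¹` diagonalizable with
spectral radius at most `ρ < 1`, perturbed iterations `D (k+1) = G k * D k + B k`
with geometrically converging `G k → Ḡ` and `B k → B̄` converge to
`D̄ = (I - Ḡ)⁻¹ B̄` with rate `√ρ` and explicit constants depending on
`‖Q‖_op, ‖Q⁻¹‖_op, c₁, ‖D 0‖, ‖B̄‖, ρ`. -/
theorem explicit_rate_linear_convergence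
    (n m : ℕ) (hn : 0 < n) (hm : 0 < m)
    (ρ c₁ : ℝ) (hρ : ρ ∈ Set.Ioo (0 : ℝ) 1) (hc₁ : 0 < c₁)
    (Q : Matrix (Fin n) (Fin n) ℝ) (hQ : IsUnit Q.det)
    (E : Fin n → ℝ) (hE : ∀ i, |E i| ≤ ρ)
    (Gbar : Matrix (Fin n) (Fin n) ℝ)
    (hGbar : Gbar = Q * Matrix.diagonal E * Q⁻¹)
    (Bbar : Matrix (Fin n) (Fin m) ℝ)
    (G : ℕ → Matrix (Fin n) (Fin n) ℝ) (B : ℕ → Matrix (Fin n) (Fin m) ℝ)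
    (hG : ∀ k, l2OpNorm (G k - Gbar) ≤ c₁ * ρ ^ (k + 1))
    (hB : ∀ k, frobNorm (B k - Bbar) ≤ c₁ * ρ ^ (k + 1))
    (D : ℕ → Matrix (Fin n) (Fin m) ℝ)
    (hD : ∀ k, D (k + 1) = G k * D k + B k) :
    ∀ k : ℕ,
      frobNorm (D k - (1 - Gbar)⁻¹ * Bbar) ≤
        Real.sqrt ρ ^ k * (l2OpNorm Q * l2OpNorm Q⁻¹) *
          Real.exp (c₁ * l2OpNorm Q⁻¹ * (1 + l2OpNorm Q) * Real.sqrt ρ *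
            (1 + l2OpNorm Q⁻¹ * frobNorm Bbar) / (1 - ρ) ^ 2) *
          (frobNorm (D 0) + frobNorm Bbar / (1 - ρ) +
            c₁ * (1 + l2OpNorm Q) * Real.sqrt ρ * (1 + frobNorm Bbar) /
              (1 - Real.sqrt ρ) ^ 2) :=
  explicit_rate_linear_convergence_general n m ρ c₁ hρ hc₁ Q hQ E hE Gbar hGbar Bbar G B hG hB D hD
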